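/- For real a > 0 with a ≠ 1 and any x ∈ ℝ, the Fourier series identity a^{-{x}} = ((a-1)/a) · ∑_{n∈ℤ} e^{2πinx}/(log a + 2πin) holds pointwise at every x that is not an integer, where {x} = x - ⌊x⌋ denotes the fractional part of x. -/

import Mathlib

/-!
Put `c = log a` and `t = {x} ∈ (0, 1)`. For `u` in the window `[t - 1, t]`, `a^{-{x-u}} = e^{-c(t-u)}`,
and the integrals of `e^{-c(t-u)} e^{2πinu}` over the window are `e^{2πint} (1 - e^{-c}) / (c + 2πin)`.
So the error of the `N`-th symmetric partial sum is `e^{-ct} ∫_{t-1}^{t} (e^{cu} - 1) D_N(u) du`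
with the Dirichlet kernel `D_N`. As `D_N(u) (e^{2πiu} - 1) = e^{2πi(N+1)u} - e^{-2πiNu}` and
`(e^{cu} - 1) / (e^{2πiu} - 1)` is continuous on `[t - 1, t] ⊂ (-1, 1)`, the Riemann–Lebesgue
lemma sends the error to `0`.
-/

open Complex Filter MeasureTheory Set
open scoped Real Topology

lemma cexp_two_pi_I_int_mul_fract (n : ℤ) (x : ℝ) :
    cexp (2 * π * I * n * x) = cexp (2 * π * I * n * Int.fract x) := by
  have h : cexp (2 * π * I * n * ⌊x⌋) = 1 := by
    rw [← exp_int_mul_two_pi_mul_I (n * ⌊x⌋)]; push_cast; ring_nf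
  rw [Int.fract, ofReal_sub, mul_sub, exp_sub]
  push_cast
  rw [h, div_one]

noncomputable def dirichletKernel (N : ℕ) (u : ℝ) : ℂ :=
  ∑ n ∈ Finset.Icc (-(N : ℤ)) N, cexp (2 * π * I * n * u)

lemma dirichletKernel_mul_cexp_sub_one (N : ℕ) (u : ℝ) :
    dirichletKernel N u * (cexp (2 * π * I * u) - 1) =
      cexp (2 * π * I * (N + 1) * u) - cexp (2 * π * I * (-N) * u) := by
  induction N with
  | zero => simp [dirichletKernel]
  | succ N ih =>
    have hIcc : Finset.Icc (-((N + 1 : ℕ) : ℤ)) ((N + 1 : ℕ) : ℤ) =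
        insert (-(N : ℤ) - 1) (insert ((N : ℤ) + 1) (Finset.Icc (-(N : ℤ)) N)) := by
      rw [Finset.insert_Icc_right_eq_Icc_add_one (by omega),
        Finset.insert_Icc_left_eq_Icc_sub_one (by omega)]
      push_cast; ring_nf
    rw [dirichletKernel, hIcc, Finset.sum_insert (by simp; omega), Finset.sum_insert (by simp),
      ← dirichletKernel, add_mul, add_mul, ih]
    have shift : ∀ w : ℂ, cexp (2 * π * I * w * u) * cexp (2 * π * I * u) =
        cexp (2 * π * I * (w + 1) * u) := fun w => by rw [← exp_add]; ring_nf
    push_cast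
    linear_combination (norm := ring_nf) shift (-(N : ℂ) - 1) + shift ((N : ℂ) + 1)

lemma integral_cexp_mul_cexp_two_pi_I_int_mul (c : ℝ) (n : ℤ) (t : ℝ)
    (hcn : (c : ℂ) + 2 * π * I * n ≠ 0) :
    ∫ u in (t - 1)..t, cexp (c * u) * cexp (2 * π * I * n * u) =
      cexp (c * t) * (1 - cexp (-c)) * (cexp (2 * π * I * n * t) / (c + 2 * π * I * n)) := by
  have hexp : ∀ u : ℝ,
      cexp (c * u) * cexp (2 * π * I * n * u) = cexp ((c + 2 * π * I * n) * u) := fun u => by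
    rw [← exp_add]; ring_nf
  have hperiod : cexp ((c + 2 * π * I * n) * (t - 1 : ℝ)) =
      cexp (c * t) * cexp (2 * π * I * n * t) * cexp (-c) := by
    rw [← exp_add, ← exp_add, ← (exp_periodic.int_mul n) _]
    push_cast; ring_nf
  simp_rw [hexp]
  rw [integral_exp_mul_complex hcn, hperiod,
    show (c + 2 * π * I * n) * (t : ℂ) = c * t + 2 * π * I * n * t by ring, exp_add]
  field_simp

lemma integral_cexp_two_pi_I_int_mul (n : ℤ) (t : ℝ) :
    ∫ u in (t - 1)..t, cexp (2 * π * I * n * u) = if n = 0 then 1 else 0 := by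
  split_ifs with hn
  · simp [hn]
  · have h2 : 2 * π * I * n ≠ 0 := by simp [hn, Real.pi_ne_zero, I_ne_zero]
    rw [integral_exp_mul_complex h2, div_eq_zero_iff, sub_eq_zero,
      show 2 * π * I * n * ((t - 1 : ℝ) : ℂ) = 2 * π * I * n * t + (-n : ℤ) * (2 * π * I)
        by push_cast; ring, (exp_periodic.int_mul _) _]
    exact Or.inl rfl

lemma integral_dirichletKernel (N : ℕ) (t : ℝ) :
    ∫ u in (t - 1)..t, dirichletKernel N u = 1 := by
  unfold dirichletKernel
  rw [intervalIntegral.integral_finsetSum fun n _ =>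
    (by fun_prop : Continuous _).intervalIntegrable _ _]
  simp_rw [integral_cexp_two_pi_I_int_mul]
  simp

lemma continuous_dirichletKernel (N : ℕ) : Continuous (dirichletKernel N) :=
  continuous_finsetSum _ fun n _ => by fun_prop

lemma hasDerivAt_cexp_mul_ofReal (w : ℂ) (u : ℝ) :
    HasDerivAt (fun v : ℝ => cexp (w * v)) (w * cexp (w * u)) u := by
  simpa [mul_comm] using ((hasDerivAt_id (u : ℂ)).const_mul w).cexp.comp_ofReal

lemma dslope_cexp_two_pi_I_mul_ne_zero {u : ℝ} (hu : u ∈ Ioo (-1 : ℝ) 1) :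
    dslope (fun v : ℝ => cexp (2 * π * I * v)) 0 u ≠ 0 := by
  rcases eq_or_ne u 0 with rfl | hu0
  · rw [dslope_same, (hasDerivAt_cexp_mul_ofReal _ 0).deriv]
    simp [Real.pi_ne_zero, I_ne_zero]
  · intro h
    have h1 := sub_smul_dslope (fun v : ℝ => cexp (2 * π * I * v)) 0 u
    rw [h, smul_zero, eq_comm, sub_eq_zero, ofReal_zero, mul_zero, exp_zero,
      exp_eq_one_iff] at h1
    obtain ⟨k, hk⟩ := h1
    have hku : (u : ℂ) = k :=
      mul_left_cancel₀ (by simp [Real.pi_ne_zero, I_ne_zero] : 2 * π * I ≠ 0) (by rw [hk]; ring)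
    norm_cast at hku
    subst hku
    obtain ⟨h₁, h₂⟩ := hu
    norm_cast at h₁ h₂ hu0
    omega

/-- `(e^{cu} - 1) / (e^{2πiu} - 1)`, extended continuously across `u = 0` by writing numerator
and denominator as difference quotients at `0`. -/
noncomputable def cexpSubOneRatio (c u : ℝ) : ℂ :=
  dslope (fun v : ℝ => cexp (c * v)) 0 u / dslope (fun v : ℝ => cexp (2 * π * I * v)) 0 u

lemma cexp_mul_sub_one_mul_dirichletKernel (c : ℝ) {u : ℝ} (hu : u ∈ Ioo (-1 : ℝ) 1) (N : ℕ) :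
    (cexp (c * u) - 1) * dirichletKernel N u =
      cexpSubOneRatio c u * (cexp (2 * π * I * (N + 1) * u) - cexp (2 * π * I * (-N) * u)) := by
  have hc := sub_smul_dslope (fun v : ℝ => cexp (c * v)) 0 u
  have he := sub_smul_dslope (fun v : ℝ => cexp (2 * π * I * v)) 0 u
  simp only [sub_zero, ofReal_zero, mul_zero, exp_zero, real_smul] at hc he
  rw [cexpSubOneRatio, ← dirichletKernel_mul_cexp_sub_one, ← hc, ← he]
  field_simp [dslope_cexp_two_pi_I_mul_ne_zero hu]

lemma continuousOn_cexpSubOneRatio (c : ℝ) : ContinuousOn (cexpSubOneRatio c) (Ioo (-1) 1) := by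
  have hnhds : Ioo (-1 : ℝ) 1 ∈ 𝓝 0 := Ioo_mem_nhds (by norm_num) (by norm_num)
  refine ContinuousOn.div ?_ ?_ fun u hu => dslope_cexp_two_pi_I_mul_ne_zero hu <;>
    exact (continuousOn_dslope hnhds).2
      ⟨by fun_prop, (hasDerivAt_cexp_mul_ofReal _ 0).differentiableAt⟩

lemma tendsto_intervalIntegral_mul_cexp_cocompact {g : ℝ → ℂ} {a b : ℝ} (hab : a ≤ b) :
    Tendsto (fun w : ℝ => ∫ u in a..b, g u * cexp (2 * π * I * w * u)) (cocompact ℝ) (𝓝 0) := by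
  refine ((Real.tendsto_integral_exp_smul_cocompact ((Ioc a b).indicator g)).comp
    (tendsto_cocompact_mul_left₀ (neg_ne_zero.2 one_ne_zero))).congr fun w => ?_
  rw [Function.comp_apply, intervalIntegral.integral_of_le hab,
    ← integral_indicator measurableSet_Ioc]
  congr 1
  ext v
  simp only [indicator_apply]
  split_ifs
  · rw [Circle.smul_def, Real.fourierChar_apply, smul_eq_mul, mul_comm]
    push_cast
    ring_nf
  · exact smul_zero _

lemma integral_cexp_mul_dirichletKernel {c : ℝ} (hc : c ≠ 0) (N : ℕ) (t : ℝ) :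
    ∫ u in (t - 1)..t, cexp (c * u) * dirichletKernel N u =
      cexp (c * t) * ((1 - cexp (-c)) * ∑ n ∈ Finset.Icc (-(N : ℤ)) N,
        cexp (2 * π * I * n * t) / (c + 2 * π * I * n)) := by
  have hcn : ∀ n : ℤ, (c : ℂ) + 2 * π * I * n ≠ 0 := fun n h => hc (by simpa using congrArg re h)
  simp_rw [dirichletKernel, Finset.mul_sum]
  rw [intervalIntegral.integral_finsetSum fun n _ =>
    (by fun_prop : Continuous _).intervalIntegrable _ _]
  simp_rw [integral_cexp_mul_cexp_two_pi_I_int_mul c _ t (hcn _), mul_assoc]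

theorem tendsto_fourier_partial_sums_cexp_neg_mul {c t : ℝ} (hc : c ≠ 0) (ht : t ∈ Ioo (0 : ℝ) 1) :
    Tendsto (fun N : ℕ => (1 - cexp (-c)) * ∑ n ∈ Finset.Icc (-(N : ℤ)) N,
        cexp (2 * π * I * n * t) / (c + 2 * π * I * n)) atTop (𝓝 (cexp (-c * t))) := by
  set A : ℝ → ℂ := fun w => ∫ u in (t - 1)..t, cexpSubOneRatio c u * cexp (2 * π * I * w * u)
    with hA
  have hsub : uIcc (t - 1) t ⊆ Ioo (-1) 1 := by
    rw [uIcc_of_le (by linarith)]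
    exact Icc_subset_Ioo (by linarith [ht.1]) (by linarith [ht.2])
  have hg : IntervalIntegrable (cexpSubOneRatio c) volume (t - 1) t :=
    ((continuousOn_cexpSubOneRatio c).mono hsub).intervalIntegrable
  have herror : ∀ N : ℕ, (1 - cexp (-c)) * ∑ n ∈ Finset.Icc (-(N : ℤ)) N,
      cexp (2 * π * I * n * t) / (c + 2 * π * I * n) - cexp (-c * t) =
        cexp (-c * t) * (A (N + 1) - A (-N)) := by
    intro N
    calc _ = cexp (-c * t) * ((∫ u in (t - 1)..t, cexp (c * u) * dirichletKernel N u) -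
          ∫ u in (t - 1)..t, dirichletKernel N u) := by
          rw [integral_cexp_mul_dirichletKernel hc, integral_dirichletKernel, mul_sub, mul_one,
            ← mul_assoc, ← exp_add, neg_mul, neg_add_cancel, exp_zero, one_mul]
      _ = cexp (-c * t) * (A (N + 1) - A (-N)) := by
          have hD := continuous_dirichletKernel N
          rw [← intervalIntegral.integral_sub ((by fun_prop : Continuous _).intervalIntegrable _ _)
            (hD.intervalIntegrable _ _), hA, ← intervalIntegral.integral_sub
            (hg.mul_continuousOn (by fun_prop)) (hg.mul_continuousOn (by fun_prop))]
          congr 1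
          refine intervalIntegral.integral_congr fun u hu => ?_
          rw [← sub_one_mul, cexp_mul_sub_one_mul_dirichletKernel c (hsub hu)]
          push_cast
          ring
  have hlim : Tendsto (fun N : ℕ => cexp (-c * t) * (A (N + 1) - A (-N))) atTop (𝓝 0) := by
    have hA0 : Tendsto A (cocompact ℝ) (𝓝 0) :=
      tendsto_intervalIntegral_mul_cexp_cocompact (by linarith)
    have h1 : Tendsto (fun N : ℕ => (N : ℝ) + 1) atTop (cocompact ℝ) :=
      (tendsto_atTop_add_const_right _ 1 tendsto_natCast_atTop_atTop).mono_right atTop_le_cocompact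
    have h2 : Tendsto (fun N : ℕ => -(N : ℝ)) atTop (cocompact ℝ) :=
      (tendsto_neg_atTop_atBot.comp tendsto_natCast_atTop_atTop).mono_right atBot_le_cocompact
    simpa only [sub_zero, mul_zero, Function.comp_apply] using
      ((hA0.comp h1).sub (hA0.comp h2)).const_mul (cexp (-c * t))
  simpa using (hlim.congr fun N => (herror N).symm).add_const (cexp (-c * t))

theorem fourier_series_of_a_pow_neg_frac (a : ℝ) (ha : 0 < a) (ha1 : a ≠ 1)
    (x : ℝ) (hx : ∀ k : ℤ, x ≠ (k : ℝ)) :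
    Tendsto (fun N : ℕ =>
        ((a - 1) / a : ℂ) * ∑ n ∈ Finset.Icc (-(N : ℤ)) (N : ℤ),
          Complex.exp (2 * Real.pi * Complex.I * n * x)
            / ((Real.log a : ℂ) + 2 * Real.pi * Complex.I * n))
      atTop (nhds ((a ^ (-Int.fract x) : ℝ) : ℂ)) := by
  have hfract : Int.fract x ∈ Ioo (0 : ℝ) 1 := ⟨Int.fract_pos.2 (hx _), Int.fract_lt_one x⟩
  have hcoeff : ((a - 1) / a : ℂ) = 1 - cexp (-(Real.log a)) := by
    rw [← ofReal_neg, ← ofReal_exp, Real.exp_neg, Real.exp_log ha, ofReal_inv]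
    field_simp [ofReal_ne_zero.2 ha.ne']
  have hlimit : ((a ^ (-Int.fract x) : ℝ) : ℂ) = cexp (-(Real.log a) * Int.fract x) := by
    rw [Real.rpow_def_of_pos ha, ofReal_exp]
    push_cast
    ring_nf
  simp_rw [hcoeff, hlimit, cexp_two_pi_I_int_mul_fract _ x]
  exact tendsto_fourier_partial_sums_cexp_neg_mul (Real.log_ne_zero_of_pos_of_ne_one ha ha1) hfract
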